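/- arXiv:2405.19951 — 6 statements merged into one kernel-verified Lean document; each statement's English description precedes it below -/
import Mathlib

section
/- Let E be a real vector space, let n ≥ 1 and s ∈ {1,…,n}, and let γ > 0. Let x ∈ E and g_1,…,g_n ∈ E, and set g := (1/n)·∑_{i=1}^n g_i. Let Ω ⊆ {1,…,n} be any subset with |Ω| = s, and for each i ∈ Ω let x_i' ∈ E be arbitrary. Define, for i ∈ Ω, z_i := x + γ·g_i − γ·g and g_i' := (1/γ)·(z_i − x_i'); for i ∉ Ω define g_i' := g_i; and define x' := (1/s)·∑_{i∈Ω} x_i'. Then (1/n)·∑_{i=1}^n g_i' = ((n−s)/n)·g + (s/(n·γ))·(x − x'). -/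
/-!
Off `Ω` nothing changes, and on `Ω` each estimate moves by `g_i' - g_i = γ⁻¹ • (x - x_i') - g`.
Summing these `s` increments gives `γ⁻¹ • s • (x - x') - s • g`, because `∑_{i ∈ Ω} x_i' = s • x'`,
and adding them to `∑ g_i = n • g` yields the closed form.
-/

open Finset

theorem Finset.sum_eq_sum_add_sum_sub_of_eqOn_compl {ι M : Type*} [Fintype ι] [DecidableEq ι]
    [AddCommGroup M] {f f' : ι → M} (Ω : Finset ι) (h : ∀ i ∉ Ω, f' i = f i) :
    ∑ i, f' i = ∑ i, f i + ∑ i ∈ Ω, (f' i - f i) := by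
  have hcompl : ∑ i ∈ Ωᶜ, f' i = ∑ i ∈ Ωᶜ, f i :=
    sum_congr rfl fun i hi => h i (mem_compl.mp hi)
  rw [← sum_add_sum_compl Ω f', ← sum_add_sum_compl Ω f, hcompl, sum_sub_distrib]
  abel

theorem Finset.card_smul_inv_card_smul_sum {ι K E : Type*} [Field K] [CharZero K]
    [AddCommGroup E] [Module K E] (Ω : Finset ι) (v : ι → E) :
    (#Ω : K) • ((#Ω : K)⁻¹ • ∑ i ∈ Ω, v i) = ∑ i ∈ Ω, v i := by
  rcases Ω.eq_empty_or_nonempty with rfl | hΩ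
  · simp
  · exact smul_inv_smul₀ (Nat.cast_ne_zero.mpr hΩ.card_ne_zero) _

theorem pointSAGA_average_update_general {E : Type*} [AddCommGroup E] [Module ℝ E]
    (n s : ℕ)
    (γ : ℝ) (hγ : 0 < γ)
    (x : E) (gi : Fin n → E) (g : E) (hg : g = (n : ℝ)⁻¹ • ∑ i, gi i)
    (Ω : Finset (Fin n)) (hΩ : Ω.card = s)
    (xi' : Fin n → E)
    (z : Fin n → E) (hz : ∀ i ∈ Ω, z i = x + γ • gi i - γ • g)
    (gi' : Fin n → E)
    (hin : ∀ i ∈ Ω, gi' i = γ⁻¹ • (z i - xi' i))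
    (hout : ∀ i ∉ Ω, gi' i = gi i)
    (x' : E) (hx' : x' = (s : ℝ)⁻¹ • ∑ i ∈ Ω, xi' i) :
    (n : ℝ)⁻¹ • ∑ i, gi' i
      = (((n : ℝ) - s) / n) • g + ((s : ℝ) / (n * γ)) • (x - x') := by
  have hincrement : ∀ i ∈ Ω, gi' i - gi i = γ⁻¹ • (x - xi' i) - g := by
    intro i hi
    rw [hin i hi, hz i hi]
    simp only [smul_sub, smul_add, inv_smul_smul₀ hγ.ne']
    abel
  have hsum_gi : ∑ i, gi i = (n : ℝ) • g := by
    simpa [hg] using (card_smul_inv_card_smul_sum (K := ℝ) univ gi).symm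
  have hsum_xi' : ∑ i ∈ Ω, xi' i = (s : ℝ) • x' := by
    rw [hx', ← hΩ, card_smul_inv_card_smul_sum]
  have hsum_gi' : ∑ i, gi' i = ((n : ℝ) - s) • g + ((s : ℝ) * γ⁻¹) • (x - x') := by
    rw [sum_eq_sum_add_sum_sub_of_eqOn_compl Ω hout, sum_congr rfl hincrement, hsum_gi,
      sum_sub_distrib, ← smul_sum, sum_sub_distrib, hsum_xi', sum_const, sum_const, hΩ,
      ← Nat.cast_smul_eq_nsmul ℝ, ← Nat.cast_smul_eq_nsmul ℝ]
    match_scalars <;> ring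
  rw [hsum_gi']
  match_scalars <;> ring

/-- Proposition 1 of the paper (one-step form): in Point-SAGA, the running average
of the gradient estimates can be updated in closed form. -/
theorem pointSAGA_average_update {E : Type*} [AddCommGroup E] [Module ℝ E]
    (n s : ℕ) (hn : 1 ≤ n) (hs1 : 1 ≤ s) (hsn : s ≤ n)
    (γ : ℝ) (hγ : 0 < γ)
    (x : E) (gi : Fin n → E) (g : E) (hg : g = (n : ℝ)⁻¹ • ∑ i, gi i)
    (Ω : Finset (Fin n)) (hΩ : Ω.card = s)
    (xi' : Fin n → E)
    (z : Fin n → E) (hz : ∀ i ∈ Ω, z i = x + γ • gi i - γ • g)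
    (gi' : Fin n → E)
    (hin : ∀ i ∈ Ω, gi' i = γ⁻¹ • (z i - xi' i))
    (hout : ∀ i ∉ Ω, gi' i = gi i)
    (x' : E) (hx' : x' = (s : ℝ)⁻¹ • ∑ i ∈ Ω, xi' i) :
    (n : ℝ)⁻¹ • ∑ i, gi' i
      = (((n : ℝ) - s) / n) • g + ((s : ℝ) / (n * γ)) • (x - x') :=
  pointSAGA_average_update_general n s γ hγ x gi g hg Ω hΩ xi' z hz gi' hin hout x' hx'
end

section
/- Let E be a finite-dimensional real inner product space, let n ≥ 1, s ∈ {1,…,n}, and γ ∈ ℝ. Let x, y ∈ E, let g_1,…,g_n ∈ E and h_1,…,h_n ∈ E with ∑_{i=1}^n h_i = 0, and set g := (1/n)·∑_{i=1}^n g_i. Then the average over all subsets Ω ⊆ {1,…,n} with |Ω| = s (i.e., (1/C(n,s))·∑_Ω, where C(n,s) is the binomial coefficient) satisfies: (1/C(n,s))·∑_{Ω} ∑_{i∈Ω} ‖x − y − γ·g + γ·g_i − γ·h_i‖² = s·‖x − y‖² + (s/n)·γ²·∑_{i=1}^n ‖g_i − h_i‖² − s·γ²·‖g‖², and in particular this average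 is at most s·‖x − y‖² + (s/n)·γ²·∑_{i=1}^n ‖g_i − h_i‖². -/
/-!
Each index lies in `C(n-1, s-1)` of the `C(n, s)` subsets of size `s`, so averaging
`∑_{i ∈ Ω}` over `Ω` gives `(s/n) ∑_i`. Each summand is `(x - y) + γ (vᵢ - g)` with
`vᵢ = gᵢ - hᵢ`, and the `vᵢ` have mean `g` because `∑ hᵢ = 0`: the cross term vanishes and
`∑ ‖vᵢ - g‖² = ∑ ‖vᵢ‖² - n ‖g‖²`.
-/

open Finset

namespace Finset

variable {α : Type*} [DecidableEq α]

theorem card_filter_mem_powersetCard_succ {s : Finset α} {a : α} (ha : a ∈ s) (k : ℕ) :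
    #{t ∈ powersetCard (k + 1) s | a ∈ t} = (#s - 1).choose k := by
  rw [← card_erase_of_mem ha, ← card_powersetCard]
  refine card_nbij' (·.erase a) (insert a) ?_ ?_ ?_ ?_ <;> intro t ht <;>
    simp only [coe_filter, mem_coe, mem_powersetCard] at ht ⊢ <;> grind

theorem sum_powersetCard_succ_sum {M : Type*} [AddCommMonoid M] (s : Finset α) (k : ℕ)
    (f : α → M) :
    ∑ t ∈ powersetCard (k + 1) s, ∑ i ∈ t, f i = (#s - 1).choose k • ∑ i ∈ s, f i := by
  rw [sum_comm' (t' := s) (s' := fun i => {t ∈ powersetCard (k + 1) s | i ∈ t})]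
  · rw [smul_sum]
    refine sum_congr rfl fun i hi => ?_
    rw [sum_const, card_filter_mem_powersetCard_succ hi]
  · intro t i
    simp only [mem_filter, mem_powersetCard]
    grind

theorem inv_choose_mul_sum_powersetCard_sum (s : Finset α) {k : ℕ} (hk : k ≤ #s) (f : α → ℝ) :
    ((#s).choose k : ℝ)⁻¹ * ∑ t ∈ powersetCard k s, ∑ i ∈ t, f i = k / #s * ∑ i ∈ s, f i := by
  cases k with
  | zero => simp
  | succ k =>
    have hs : (#s : ℝ) ≠ 0 := by exact_mod_cast (by omega : #s ≠ 0)
    have hchoose_ne : ((#s).choose (k + 1) : ℝ) ≠ 0 := by exact_mod_cast (Nat.choose_pos hk).ne'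
    have hchoose_mul : (#s * (#s - 1).choose k : ℝ) = (#s).choose (k + 1) * (k + 1) := by
      have := Nat.add_one_mul_choose_eq (#s - 1) k
      rw [Nat.sub_add_cancel (by omega)] at this
      exact_mod_cast this
    rw [sum_powersetCard_succ_sum, nsmul_eq_mul]
    field_simp
    push_cast
    linear_combination (∑ i ∈ s, f i) * hchoose_mul

section InnerProductSpace

variable {ι E : Type*} [NormedAddCommGroup E] [InnerProductSpace ℝ E]

theorem sum_norm_add_sq_real (s : Finset ι) (a : E) (w : ι → E) :
    ∑ i ∈ s, ‖a + w i‖ ^ 2 = #s * ‖a‖ ^ 2 + 2 * inner ℝ a (∑ i ∈ s, w i) + ∑ i ∈ s, ‖w i‖ ^ 2 := by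
  simp only [norm_add_sq_real, sum_add_distrib, sum_const, nsmul_eq_mul, inner_sum, mul_sum]

theorem sum_norm_sub_mean_sq (s : Finset ι) (v : ι → E) {m : E}
    (hm : ∑ i ∈ s, v i = (#s : ℝ) • m) :
    ∑ i ∈ s, ‖v i - m‖ ^ 2 = ∑ i ∈ s, ‖v i‖ ^ 2 - #s * ‖m‖ ^ 2 := by
  simp only [← neg_add_eq_sub, sum_norm_add_sq_real, hm, inner_smul_right, inner_neg_left,
    real_inner_self_eq_norm_sq, norm_neg]
  ring

theorem sum_norm_add_smul_sub_mean_sq (s : Finset ι) (a : E) (c : ℝ) (v : ι → E) {m : E}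
    (hm : ∑ i ∈ s, v i = (#s : ℝ) • m) :
    ∑ i ∈ s, ‖a + c • (v i - m)‖ ^ 2
      = #s * ‖a‖ ^ 2 + c ^ 2 * (∑ i ∈ s, ‖v i‖ ^ 2 - #s * ‖m‖ ^ 2) := by
  have hcentered : ∑ i ∈ s, c • (v i - m) = 0 := by
    rw [← smul_sum, sum_sub_distrib, hm, sum_const, ← Nat.cast_smul_eq_nsmul ℝ, sub_self,
      smul_zero]
  rw [sum_norm_add_sq_real, hcentered, inner_zero_right, ← sum_norm_sub_mean_sq s v hm]
  simp only [norm_smul, mul_pow, Real.norm_eq_abs, sq_abs, ← mul_sum]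
  ring

end InnerProductSpace

end Finset

theorem subset_variance_decomposition_general {E : Type*} [NormedAddCommGroup E]
    [InnerProductSpace ℝ E]
    (n s : ℕ) (hn : 1 ≤ n) (hsn : s ≤ n) (γ : ℝ)
    (x y : E) (gi h : Fin n → E) (hh : ∑ i, h i = 0)
    (g : E) (hg : g = (n : ℝ)⁻¹ • ∑ i, gi i) :
    ((n.choose s : ℝ))⁻¹ *
        ∑ Ω ∈ powersetCard s (univ : Finset (Fin n)),
          ∑ i ∈ Ω, ‖x - y - γ • g + γ • gi i - γ • h i‖ ^ 2
      = (s : ℝ) * ‖x - y‖ ^ 2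
          + ((s : ℝ) / n) * γ ^ 2 * ∑ i, ‖gi i - h i‖ ^ 2
          - (s : ℝ) * γ ^ 2 * ‖g‖ ^ 2 ∧
    ((n.choose s : ℝ))⁻¹ *
        ∑ Ω ∈ powersetCard s (univ : Finset (Fin n)),
          ∑ i ∈ Ω, ‖x - y - γ • g + γ • gi i - γ • h i‖ ^ 2
      ≤ (s : ℝ) * ‖x - y‖ ^ 2
          + ((s : ℝ) / n) * γ ^ 2 * ∑ i, ‖gi i - h i‖ ^ 2 := by
  have hn0 : (n : ℝ) ≠ 0 := by positivity
  have hmean : ∑ i ∈ univ, (gi i - h i) = (#(univ : Finset (Fin n)) : ℝ) • g := by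
    rw [sum_sub_distrib, hh, sub_zero, card_univ, Fintype.card_fin, hg, smul_inv_smul₀ hn0]
  have hsplit : ∀ i, x - y - γ • g + γ • gi i - γ • h i = (x - y) + γ • (gi i - h i - g) := by
    intro i
    module
  have haverage := inv_choose_mul_sum_powersetCard_sum univ (by simpa using hsn)
    fun i => ‖(x - y) + γ • (gi i - h i - g)‖ ^ 2
  rw [sum_norm_add_smul_sub_mean_sq _ _ _ _ hmean] at haverage
  simp only [card_univ, Fintype.card_fin] at haverage
  have hexpand : (s : ℝ) / n * (n * ‖x - y‖ ^ 2 + γ ^ 2 * (∑ i, ‖gi i - h i‖ ^ 2 - n * ‖g‖ ^ 2))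
      = s * ‖x - y‖ ^ 2 + s / n * γ ^ 2 * ∑ i, ‖gi i - h i‖ ^ 2 - s * γ ^ 2 * ‖g‖ ^ 2 := by
    field_simp
    ring
  simp only [hsplit]
  rw [haverage, hexpand]
  exact ⟨rfl, sub_le_self _ (by positivity)⟩

/-- The variance decomposition (eql1) of the paper: the average over all size-s
subsets Ω of `∑_{i∈Ω} ‖x - y - γg + γgᵢ - γhᵢ‖²`, where `∑ hᵢ = 0` and `g` is the
average of the `gᵢ`. -/
theorem subset_variance_decomposition {E : Type*} [NormedAddCommGroup E]
    [InnerProductSpace ℝ E] [FiniteDimensional ℝ E]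
    (n s : ℕ) (hn : 1 ≤ n) (hs1 : 1 ≤ s) (hsn : s ≤ n) (γ : ℝ)
    (x y : E) (gi h : Fin n → E) (hh : ∑ i, h i = 0)
    (g : E) (hg : g = (n : ℝ)⁻¹ • ∑ i, gi i) :
    ((n.choose s : ℝ))⁻¹ *
        ∑ Ω ∈ powersetCard s (univ : Finset (Fin n)),
          ∑ i ∈ Ω, ‖x - y - γ • g + γ • gi i - γ • h i‖ ^ 2
      = (s : ℝ) * ‖x - y‖ ^ 2
          + ((s : ℝ) / n) * γ ^ 2 * ∑ i, ‖gi i - h i‖ ^ 2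
          - (s : ℝ) * γ ^ 2 * ‖g‖ ^ 2 ∧
    ((n.choose s : ℝ))⁻¹ *
        ∑ Ω ∈ powersetCard s (univ : Finset (Fin n)),
          ∑ i ∈ Ω, ‖x - y - γ • g + γ • gi i - γ • h i‖ ^ 2
      ≤ (s : ℝ) * ‖x - y‖ ^ 2
          + ((s : ℝ) / n) * γ ^ 2 * ∑ i, ‖gi i - h i‖ ^ 2 :=
  subset_variance_decomposition_general n s hn hsn γ x y gi h hh g hg
end

section
/- Let E be a finite-dimensional real inner product space, let 0 < μ ≤ L, γ > 0, n ≥ 1 and s ∈ {1,…,n}. For each i ∈ {1,…,n}, let f_i : E → ℝ be differentiable, μ-strongly convex (f_i − (μ/2)‖·‖² is convex) and L-smooth (∇f_i is L-Lipschitz). Let x^⋆ ∈ E, let Ω ⊆ {1,…,n} with |Ω| = s, and for each i ∈ Ω let z_i ∈ E and x_i ∈ E satisfy x_i + γ·∇f_i(x_i) = z_i. Set z_i^⋆ := x^⋆ + γ·∇f_i(x^⋆) and x' := (1/s)·∑_{i∈Ω} x_i. Then (1 + 2γμL/(L+μ))·s·‖x' − x^⋆‖² + (1 + 2/(γ(L+μ)))·γ²·∑_{i∈Ω}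 ‖∇f_i(x_i) − ∇f_i(x^⋆)‖² ≤ ∑_{i∈Ω} ‖z_i − z_i^⋆‖². -/
/-!
Write `gᵢ = ∇fᵢ xᵢ - ∇fᵢ x⋆` and `dᵢ = xᵢ - x⋆`, so that `zᵢ - zᵢ⋆ = dᵢ + γ gᵢ`. The function
`φ = fᵢ - μ/2 ‖·‖²` is convex and `⟪∇φ a - ∇φ b, a - b⟫ ≤ (L - μ) ‖a - b‖²`, so `∇φ` is
co-coercive (one descent step against a supporting hyperplane); rewritten in terms of `∇fᵢ` this is
the interpolation inequality `‖gᵢ‖² + μL ‖dᵢ‖² ≤ (L + μ) ⟪gᵢ, dᵢ⟫`. Expanding `‖dᵢ + γ gᵢ‖²` and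
bounding the cross term by it gives the estimate for each `i ∈ Ω`; summing over `Ω` and using
convexity of `‖·‖²` at the average `x'` gives the claim.
-/

open Finset InnerProductSpace
open scoped RealInnerProductSpace

section Gradient

variable {E : Type*} [NormedAddCommGroup E] [InnerProductSpace ℝ E] [CompleteSpace E]
  {h : E → ℝ} {G : E → E}

theorem HasGradientAt.hasDerivAt_add_smul {g x d : E} {t : ℝ}
    (hg : HasGradientAt h g (x + t • d)) :
    HasDerivAt (fun t : ℝ => h (x + t • d)) ⟪g, d⟫ t := by
  have hline : HasDerivAt (fun t : ℝ => x + t • d) d t := by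
    simpa using ((hasDerivAt_id t).smul_const d).const_add x
  simpa [toDual_apply_apply, Function.comp_def] using hg.hasFDerivAt.comp_hasDerivAt t hline

theorem HasGradientAt.sub_half_mul_norm_sq {g p : E} (hg : HasGradientAt h g p) (c : ℝ) :
    HasGradientAt (fun x => h x - c / 2 * ‖x‖ ^ 2) (g - c • p) p := by
  have hsq := (hasStrictFDerivAt_norm_sq p).hasFDerivAt.const_mul (c / 2)
  have heq : toDual ℝ E (g - c • p) = toDual ℝ E g - (c / 2) • (2 • innerSL ℝ p) := by
    ext y
    simp only [map_sub, map_smul, sub_apply, toDual_apply_apply, smul_apply, smul_eq_mul,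
      coe_innerSL_apply, nsmul_eq_mul, Nat.cast_ofNat, sub_right_inj]
    ring
  rw [hasGradientAt_iff_hasFDerivAt, heq]
  exact hg.hasFDerivAt.sub hsq

theorem ConvexOn.add_inner_le_of_hasGradientAt (hconv : ConvexOn ℝ Set.univ h) {g x : E}
    (hg : HasGradientAt h g x) (y : E) : h x + ⟪g, y - x⟫ ≤ h y := by
  have hline : ConvexOn ℝ Set.univ (fun t : ℝ => h (x + t • (y - x))) := by
    have hcomp : (fun t : ℝ => h (x + t • (y - x))) = h ∘ AffineMap.lineMap x y := by
      funext t; simp [AffineMap.lineMap_apply, add_comm]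
    simpa [hcomp] using hconv.comp_affineMap (AffineMap.lineMap x y : ℝ →ᵃ[ℝ] E)
  have hslope := hline.le_slope_of_hasDerivAt (Set.mem_univ 0) (Set.mem_univ 1) zero_lt_one
    ((by simpa using hg : HasGradientAt h g (x + (0 : ℝ) • (y - x))).hasDerivAt_add_smul)
  simp only [slope_def_field, one_smul, add_sub_cancel, zero_smul, add_zero, sub_zero, div_one]
    at hslope
  linarith

theorem ConvexOn.inner_sub_nonneg_of_hasGradientAt (hconv : ConvexOn ℝ Set.univ h)
    {a b ga gb : E} (ha : HasGradientAt h ga a) (hb : HasGradientAt h gb b) :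
    0 ≤ ⟪ga - gb, a - b⟫ := by
  have hab := hconv.add_inner_le_of_hasGradientAt ha b
  have hba := hconv.add_inner_le_of_hasGradientAt hb a
  rw [← neg_sub a b, inner_neg_right] at hab
  rw [inner_sub_left]
  linarith

theorem le_add_inner_add_of_inner_sub_le (hG : ∀ p, HasGradientAt h (G p) p) {K : ℝ}
    (hK : ∀ u v, ⟪G u - G v, u - v⟫ ≤ K * ‖u - v‖ ^ 2) (x y : E) :
    h y ≤ h x + ⟪G x, y - x⟫ + K / 2 * ‖y - x‖ ^ 2 := by
  set d := y - x
  let ψ : ℝ → ℝ := fun t => h (x + t • d) - t * ⟪G x, d⟫ - K / 2 * ‖d‖ ^ 2 * t ^ 2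
  have hψ : ∀ t, HasDerivAt ψ (⟪G (x + t • d) - G x, d⟫ - K * ‖d‖ ^ 2 * t) t := by
    intro t
    have := ((hG (x + t • d)).hasDerivAt_add_smul.sub ((hasDerivAt_id t).mul_const ⟪G x, d⟫)).sub
      ((hasDerivAt_pow 2 t).const_mul (K / 2 * ‖d‖ ^ 2))
    refine this.congr_deriv ?_
    rw [inner_sub_left]
    simp only [Nat.cast_ofNat, Nat.add_one_sub_one, pow_one]
    ring
  obtain ⟨t, ⟨ht, -⟩, hslope⟩ := exists_hasDerivAt_eq_slope ψ _ zero_lt_one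
    (fun t _ => (hψ t).continuousAt.continuousWithinAt) (fun t _ => hψ t)
  have hstep : ⟪G (x + t • d) - G x, d⟫ ≤ K * ‖d‖ ^ 2 * t := by
    have := hK (x + t • d) x
    rw [add_sub_cancel_left, real_inner_smul_right, norm_smul, Real.norm_of_nonneg ht.le] at this
    exact le_of_mul_le_mul_left (by linarith) ht
  have hψ10 : ψ 1 ≤ ψ 0 := by
    rw [sub_zero, div_one] at hslope
    linarith
  simp only [ψ, d, one_smul, zero_smul, add_zero, add_sub_cancel] at hψ10
  linarith

-- One descent step from `a` along `-(G a - G b) / K`, against the supporting hyperplane at `b`.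
theorem ConvexOn.add_inner_add_div_le (hconv : ConvexOn ℝ Set.univ h)
    (hG : ∀ p, HasGradientAt h (G p) p) {K : ℝ} (hK0 : 0 < K)
    (hK : ∀ u v, ⟪G u - G v, u - v⟫ ≤ K * ‖u - v‖ ^ 2) (a b : E) :
    h b + ⟪G b, a - b⟫ + ‖G a - G b‖ ^ 2 / (2 * K) ≤ h a := by
  set y := a - K⁻¹ • (G a - G b)
  have hlow := hconv.add_inner_le_of_hasGradientAt (hG b) y
  have hup := le_add_inner_add_of_inner_sub_le hG hK a y
  have hya : y - a = -(K⁻¹ • (G a - G b)) := by simp [y]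
  have hyb : y - b = (a - b) - K⁻¹ • (G a - G b) := by simp only [y]; abel
  rw [hyb, inner_sub_right, real_inner_smul_right] at hlow
  rw [hya, inner_neg_right, real_inner_smul_right, norm_neg, norm_smul,
    Real.norm_of_nonneg (inv_nonneg.2 hK0.le)] at hup
  have hΔ : K⁻¹ * ⟪G a, G a - G b⟫ - K⁻¹ * ⟪G b, G a - G b⟫ = K⁻¹ * ‖G a - G b‖ ^ 2 := by
    rw [← mul_sub, ← inner_sub_left, real_inner_self_eq_norm_sq]
  have hstep : K / 2 * (K⁻¹ * ‖G a - G b‖) ^ 2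
      = K⁻¹ * ‖G a - G b‖ ^ 2 - ‖G a - G b‖ ^ 2 / (2 * K) := by
    field_simp
    ring
  linarith

theorem ConvexOn.sq_norm_sub_le_mul_inner (hconv : ConvexOn ℝ Set.univ h)
    (hG : ∀ p, HasGradientAt h (G p) p) {K : ℝ} (hK0 : 0 < K)
    (hK : ∀ u v, ⟪G u - G v, u - v⟫ ≤ K * ‖u - v‖ ^ 2) (a b : E) :
    ‖G a - G b‖ ^ 2 ≤ K * ⟪G a - G b, a - b⟫ := by
  have hab := hconv.add_inner_add_div_le hG hK0 hK a b
  have hba := hconv.add_inner_add_div_le hG hK0 hK b a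
  rw [norm_sub_rev, ← neg_sub a b, inner_neg_right] at hba
  have hhalf : ‖G a - G b‖ ^ 2 / K = ‖G a - G b‖ ^ 2 / (2 * K) + ‖G a - G b‖ ^ 2 / (2 * K) := by
    ring
  rw [← div_le_iff₀' hK0, hhalf, inner_sub_left]
  linarith

theorem norm_sub_sq_add_mul_norm_sub_sq_le_mul_inner (hG : ∀ p, HasGradientAt h (G p) p)
    {μ L : ℝ} (hμ : 0 ≤ μ) (hμL : μ ≤ L)
    (hsc : ConvexOn ℝ Set.univ (fun x => h x - μ / 2 * ‖x‖ ^ 2))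
    (hsmooth : ∀ a b, ‖G a - G b‖ ≤ L * ‖a - b‖) (a b : E) :
    ‖G a - G b‖ ^ 2 + μ * L * ‖a - b‖ ^ 2 ≤ (L + μ) * ⟪G a - G b, a - b⟫ := by
  have hφ : ∀ p, HasGradientAt (fun x => h x - μ / 2 * ‖x‖ ^ 2) (G p - μ • p) p :=
    fun p => (hG p).sub_half_mul_norm_sq μ
  have hsub : ∀ u v : E, (G u - μ • u) - (G v - μ • v) = (G u - G v) - μ • (u - v) := by
    intro u v
    rw [smul_sub]
    abel
  have hinner : ∀ u v : E,
      ⟪(G u - μ • u) - (G v - μ • v), u - v⟫ = ⟪G u - G v, u - v⟫ - μ * ‖u - v‖ ^ 2 := by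
    intro u v
    rw [hsub, inner_sub_left, real_inner_smul_left, real_inner_self_eq_norm_sq]
  rcases hμL.eq_or_lt with rfl | hlt
  -- Co-coercivity needs `L - μ > 0`; for `L = μ`, strong monotonicity and Lipschitz suffice.
  · have hmono := hsc.inner_sub_nonneg_of_hasGradientAt (hφ a) (hφ b)
    rw [hinner] at hmono
    have := hsmooth a b
    nlinarith [norm_nonneg (G a - G b), norm_nonneg (a - b)]
  · have hK : ∀ u v : E, ⟪(G u - μ • u) - (G v - μ • v), u - v⟫ ≤ (L - μ) * ‖u - v‖ ^ 2 := by
      intro u v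
      rw [hinner]
      have := real_inner_le_norm (G u - G v) (u - v)
      nlinarith [hsmooth u v, norm_nonneg (u - v)]
    have hco := hsc.sq_norm_sub_le_mul_inner hφ (sub_pos.2 hlt) hK a b
    rw [hinner, hsub, norm_sub_sq_real, real_inner_smul_right, norm_smul,
      Real.norm_of_nonneg hμ] at hco
    nlinarith

end Gradient

theorem mul_norm_sq_add_mul_norm_sq_le_norm_add_smul_sq {E : Type*} [NormedAddCommGroup E]
    [InnerProductSpace ℝ E] {μ L γ : ℝ} (hγ : 0 < γ) (hLμ : 0 < L + μ) {d g : E}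
    (hdg : ‖g‖ ^ 2 + μ * L * ‖d‖ ^ 2 ≤ (L + μ) * ⟪g, d⟫) :
    (1 + 2 * γ * μ * L / (L + μ)) * ‖d‖ ^ 2 + (1 + 2 / (γ * (L + μ))) * γ ^ 2 * ‖g‖ ^ 2
      ≤ ‖d + γ • g‖ ^ 2 := by
  have hexpand : ‖d + γ • g‖ ^ 2 = ‖d‖ ^ 2 + 2 * γ * ⟪g, d⟫ + γ ^ 2 * ‖g‖ ^ 2 := by
    rw [norm_add_sq_real, real_inner_smul_right, norm_smul, Real.norm_of_nonneg hγ.le,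
      real_inner_comm]
    ring
  rw [hexpand]
  calc (1 + 2 * γ * μ * L / (L + μ)) * ‖d‖ ^ 2 + (1 + 2 / (γ * (L + μ))) * γ ^ 2 * ‖g‖ ^ 2
      = ‖d‖ ^ 2 + γ ^ 2 * ‖g‖ ^ 2 + 2 * γ / (L + μ) * (‖g‖ ^ 2 + μ * L * ‖d‖ ^ 2) := by
        field_simp
        ring
    _ ≤ ‖d‖ ^ 2 + γ ^ 2 * ‖g‖ ^ 2 + 2 * γ / (L + μ) * ((L + μ) * ⟪g, d⟫) := by gcongr
    _ = ‖d‖ ^ 2 + 2 * γ * ⟪g, d⟫ + γ ^ 2 * ‖g‖ ^ 2 := by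
        field_simp
        ring

theorem card_mul_norm_inv_smul_sum_sub_sq_le {ι E : Type*} [SeminormedAddCommGroup E]
    [NormedSpace ℝ E] (s : Finset ι) (x : ι → E) (c : E) :
    (#s : ℝ) * ‖(#s : ℝ)⁻¹ • ∑ i ∈ s, x i - c‖ ^ 2 ≤ ∑ i ∈ s, ‖x i - c‖ ^ 2 := by
  rcases s.eq_empty_or_nonempty with rfl | hs
  · simp
  have hcard : (0 : ℝ) < #s := by exact_mod_cast hs.card_pos
  have hcentre : (#s : ℝ)⁻¹ • ∑ i ∈ s, x i - c = (#s : ℝ)⁻¹ • ∑ i ∈ s, (x i - c) := by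
    rw [sum_sub_distrib, sum_const, smul_sub, ← Nat.cast_smul_eq_nsmul ℝ, smul_smul,
      inv_mul_cancel₀ hcard.ne', one_smul]
  have hsq : ‖∑ i ∈ s, (x i - c)‖ ^ 2 ≤ #s * ∑ i ∈ s, ‖x i - c‖ ^ 2 :=
    (pow_le_pow_left₀ (norm_nonneg _) (norm_sum_le _ _) 2).trans sq_sum_le_card_mul_sum_sq
  rw [hcentre, norm_smul, mul_pow, norm_inv, RCLike.norm_natCast]
  calc (#s : ℝ) * ((#s : ℝ)⁻¹ ^ 2 * ‖∑ i ∈ s, (x i - c)‖ ^ 2)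
      = (#s : ℝ)⁻¹ * ‖∑ i ∈ s, (x i - c)‖ ^ 2 := by field_simp
    _ ≤ ∑ i ∈ s, ‖x i - c‖ ^ 2 := by rwa [inv_mul_le_iff₀ hcard]

theorem pointSAGA_one_realization_general {E : Type*} [NormedAddCommGroup E]
    [InnerProductSpace ℝ E] [FiniteDimensional ℝ E]
    (μ L γ : ℝ) (hμ : 0 < μ) (hμL : μ ≤ L) (hγ : 0 < γ)
    (n s : ℕ)
    (f : Fin n → E → ℝ) (hdiff : ∀ i, Differentiable ℝ (f i))
    (hsc : ∀ i, ConvexOn ℝ Set.univ (fun x => f i x - μ / 2 * ‖x‖ ^ 2))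
    (hsmooth : ∀ i, ∀ a b : E, ‖gradient (f i) a - gradient (f i) b‖ ≤ L * ‖a - b‖)
    (xstar : E) (Ω : Finset (Fin n)) (hΩ : Ω.card = s)
    (z xi : Fin n → E)
    (hxi : ∀ i ∈ Ω, xi i + γ • gradient (f i) (xi i) = z i)
    (zstar : Fin n → E) (hzstar : ∀ i, zstar i = xstar + γ • gradient (f i) xstar)
    (x' : E) (hx' : x' = (s : ℝ)⁻¹ • ∑ i ∈ Ω, xi i) :
    (1 + 2 * γ * μ * L / (L + μ)) * s * ‖x' - xstar‖ ^ 2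
      + (1 + 2 / (γ * (L + μ))) * γ ^ 2 *
          ∑ i ∈ Ω, ‖gradient (f i) (xi i) - gradient (f i) xstar‖ ^ 2
      ≤ ∑ i ∈ Ω, ‖z i - zstar i‖ ^ 2 := by
  subst hΩ hx'
  have hL : 0 < L := hμ.trans_le hμL
  set c₁ := 1 + 2 * γ * μ * L / (L + μ)
  set c₂ := (1 + 2 / (γ * (L + μ))) * γ ^ 2
  have hterm : ∀ i ∈ Ω, c₁ * ‖xi i - xstar‖ ^ 2
      + c₂ * ‖gradient (f i) (xi i) - gradient (f i) xstar‖ ^ 2 ≤ ‖z i - zstar i‖ ^ 2 := by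
    intro i hi
    have hz : z i - zstar i
        = (xi i - xstar) + γ • (gradient (f i) (xi i) - gradient (f i) xstar) := by
      rw [← hxi i hi, hzstar i, smul_sub]
      abel
    rw [hz]
    exact mul_norm_sq_add_mul_norm_sq_le_norm_add_smul_sq hγ (by positivity)
      (norm_sub_sq_add_mul_norm_sub_sq_le_mul_inner (fun p => (hdiff i p).hasGradientAt)
        hμ.le hμL (hsc i) (hsmooth i) _ _)
  calc c₁ * #Ω * ‖(#Ω : ℝ)⁻¹ • ∑ i ∈ Ω, xi i - xstar‖ ^ 2
        + c₂ * ∑ i ∈ Ω, ‖gradient (f i) (xi i) - gradient (f i) xstar‖ ^ 2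
      ≤ c₁ * ∑ i ∈ Ω, ‖xi i - xstar‖ ^ 2
        + c₂ * ∑ i ∈ Ω, ‖gradient (f i) (xi i) - gradient (f i) xstar‖ ^ 2 := by
        rw [mul_assoc]
        gcongr
        exact card_mul_norm_inv_smul_sum_sub_sq_le Ω xi xstar
    _ = ∑ i ∈ Ω, (c₁ * ‖xi i - xstar‖ ^ 2
        + c₂ * ‖gradient (f i) (xi i) - gradient (f i) xstar‖ ^ 2) := by
        rw [mul_sum, mul_sum, sum_add_distrib]
    _ ≤ ∑ i ∈ Ω, ‖z i - zstar i‖ ^ 2 := sum_le_sum hterm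

/-- Inequalities (eq41)+(eqa21) of the paper: the per-iteration deterministic
estimate for one realization of the random subset Ω in Point-SAGA, where
`xᵢ = prox_{γfᵢ}(zᵢ)` is characterized by `xᵢ + γ∇fᵢ(xᵢ) = zᵢ`. -/
theorem pointSAGA_one_realization {E : Type*} [NormedAddCommGroup E]
    [InnerProductSpace ℝ E] [FiniteDimensional ℝ E]
    (μ L γ : ℝ) (hμ : 0 < μ) (hμL : μ ≤ L) (hγ : 0 < γ)
    (n s : ℕ) (hn : 1 ≤ n) (hs1 : 1 ≤ s) (hsn : s ≤ n)
    (f : Fin n → E → ℝ) (hdiff : ∀ i, Differentiable ℝ (f i))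
    (hsc : ∀ i, ConvexOn ℝ Set.univ (fun x => f i x - μ / 2 * ‖x‖ ^ 2))
    (hsmooth : ∀ i, ∀ a b : E, ‖gradient (f i) a - gradient (f i) b‖ ≤ L * ‖a - b‖)
    (xstar : E) (Ω : Finset (Fin n)) (hΩ : Ω.card = s)
    (z xi : Fin n → E)
    (hxi : ∀ i ∈ Ω, xi i + γ • gradient (f i) (xi i) = z i)
    (zstar : Fin n → E) (hzstar : ∀ i, zstar i = xstar + γ • gradient (f i) xstar)
    (x' : E) (hx' : x' = (s : ℝ)⁻¹ • ∑ i ∈ Ω, xi i) :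
    (1 + 2 * γ * μ * L / (L + μ)) * s * ‖x' - xstar‖ ^ 2
      + (1 + 2 / (γ * (L + μ))) * γ ^ 2 *
          ∑ i ∈ Ω, ‖gradient (f i) (xi i) - gradient (f i) xstar‖ ^ 2
      ≤ ∑ i ∈ Ω, ‖z i - zstar i‖ ^ 2 :=
  pointSAGA_one_realization_general μ L γ hμ hμL hγ n s f hdiff hsc hsmooth xstar Ω hΩ z xi hxi
    zstar hzstar x' hx'
end

section
/- Let E be a finite-dimensional real inner product space, let 0 < μ ≤ L, γ > 0, n ≥ 1 and s ∈ {1,…,n}. For each i ∈ {1,…,n}, let f_i : E → ℝ be differentiable, μ-strongly convex and L-smooth, and let x^⋆ ∈ E satisfy ∑_{i=1}^n ∇f_i(x^⋆) = 0 (the minimizer of ∑ f_i). Let x ∈ E and g_1,…,g_n ∈ E, and set g := (1/n)∑_{i=1}^n g_i. For each subset Ω ⊆ {1,…,n} with |Ω| = s, define one Point-SAGA step: for i ∈ Ω, z_i := x + γ·g_i − γ·g, let x_i'(Ω) be the unique point with x_i'(Ω) + γ·∇f_i(x_i'(Ω)) = z_i, and g_i'(Ω) := ∇f_i(x_i'(Ω));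 for i ∉ Ω, g_i'(Ω) := g_i; and x'(Ω) := (1/s)·∑_{i∈Ω} x_i'(Ω). Define the Lyapunov function Ψ(y, h_1,…,h_n) := (1 + 2γμL/(L+μ))·s·‖y − x^⋆‖² + (1 + 2/(γ(L+μ)))·γ²·∑_{i=1}^n ‖h_i − ∇f_i(x^⋆)‖². Then the average over all size-s subsets satisfies (1/C(n,s))·∑_{Ω} Ψ(x'(Ω), g_1'(Ω),…,g_n'(Ω)) ≤ max{ 1 − 2γμL/(L + μ + 2γμL), 1 − (2/(γ(L+μ)+2))·(s/n) } · Ψ(x, g_1,…,g_n). -/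
/-!
For a μ-strongly convex, L-smooth `f`, sandwiching `f` between the quadratics given by its
gradient yields the interpolation inequality
`μL‖a - b‖² + ‖∇f a - ∇f b‖² ≤ (L + μ)⟪∇f a - ∇f b, a - b⟫`. Comparing the proximal point
`x_i' + γ∇f_i(x_i') = z_i` with `x⋆ + γ∇f_i(x⋆)`, this inequality shows that one proximal step turns
`‖z_i - x⋆ - γ∇f_i(x⋆)‖²` into at least `α‖x_i' - x⋆‖² + β‖∇f_i(x_i') - ∇f_i(x⋆)‖²`, with `α, β`
the two weights of `Ψ`. Jensen bounds the new average iterate by the sampled points, each index is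
sampled in a fraction `s/n` of the subsets, and since the `∇f_i(x⋆)` sum to zero the SAGA
corrections `g_i - g` are centred, so
`∑ᵢ ‖z_i - x⋆ - γ∇f_i(x⋆)‖² ≤ n‖x - x⋆‖² + γ²∑ᵢ‖g_i - ∇f_i(x⋆)‖²`.
Comparing coefficients of the two parts of `Ψ` gives the two contraction factors.
-/

open Finset RealInnerProductSpace Filter Topology

section QuadraticBounds

variable {E : Type*} [NormedAddCommGroup E] [InnerProductSpace ℝ E] {h : E → ℝ} {G : E → E}

theorem norm_sub_sq_le_mul_inner_of_pos {K : ℝ} (hK : 0 < K)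
    (hlow : ∀ x y, h x + ⟪G x, y - x⟫ ≤ h y)
    (hup : ∀ x y, h y ≤ h x + ⟪G x, y - x⟫ + K / 2 * ‖y - x‖ ^ 2) (x y : E) :
    ‖G y - G x‖ ^ 2 ≤ K * ⟪G y - G x, y - x⟫ := by
  -- evaluate both bounds at `y - K⁻¹ • (G y - G x)`, the minimiser of the upper bound at `y`
  -- tilted by `G x`
  have gap : ∀ x y, h x + ⟪G x, y - x⟫ + K⁻¹ / 2 * ‖G y - G x‖ ^ 2 ≤ h y := by
    intro x y
    set D := G y - G x
    have low := hlow x (y - K⁻¹ • D)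
    have up := hup y (y - K⁻¹ • D)
    rw [show y - K⁻¹ • D - x = (y - x) - K⁻¹ • D by abel, inner_sub_right,
      real_inner_smul_right] at low
    rw [sub_sub_cancel_left, inner_neg_right, real_inner_smul_right, norm_neg, norm_smul,
      Real.norm_of_nonneg (inv_nonneg.2 hK.le)] at up
    have hD : ⟪G y, D⟫ - ⟪G x, D⟫ = ‖D‖ ^ 2 := by
      rw [← inner_sub_left, real_inner_self_eq_norm_sq]
    have hKK : K / 2 * (K⁻¹ * ‖D‖) ^ 2 = K⁻¹ / 2 * ‖D‖ ^ 2 := by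
      field_simp
    linear_combination low + up - K⁻¹ * hD + hKK
  have hxy := gap x y
  have hyx := gap y x
  rw [← norm_neg, neg_sub] at hyx
  have hsum : K⁻¹ * ‖G y - G x‖ ^ 2 ≤ ⟪G y - G x, y - x⟫ := by
    have : ⟪G y, x - y⟫ = -⟪G y, y - x⟫ := by rw [← inner_neg_right, neg_sub]
    rw [inner_sub_left]
    linarith
  calc ‖G y - G x‖ ^ 2 = K * (K⁻¹ * ‖G y - G x‖ ^ 2) := by field_simp
    _ ≤ K * ⟪G y - G x, y - x⟫ := by gcongr

theorem norm_sub_sq_le_mul_inner {K : ℝ} (hK : 0 ≤ K)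
    (hlow : ∀ x y, h x + ⟪G x, y - x⟫ ≤ h y)
    (hup : ∀ x y, h y ≤ h x + ⟪G x, y - x⟫ + K / 2 * ‖y - x‖ ^ 2) (x y : E) :
    ‖G y - G x‖ ^ 2 ≤ K * ⟪G y - G x, y - x⟫ := by
  have hK' : ∀ K' > K, ‖G y - G x‖ ^ 2 ≤ K' * ⟪G y - G x, y - x⟫ := fun K' hK' =>
    norm_sub_sq_le_mul_inner_of_pos (hK.trans_lt hK') hlow
      (fun x y => (hup x y).trans (by gcongr)) x y
  have hlim : Tendsto (fun K' => K' * ⟪G y - G x, y - x⟫) (𝓝[>] K)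
      (𝓝 (K * ⟪G y - G x, y - x⟫)) :=
    ((continuous_id.mul continuous_const).tendsto K).mono_left nhdsWithin_le_nhds
  exact ge_of_tendsto hlim (eventually_nhdsWithin_of_forall hK')

theorem interpolation_of_quadratic_bounds {F : E → ℝ} {μ L : ℝ} (hμL : μ ≤ L)
    (hlow : ∀ x y, F x + ⟪G x, y - x⟫ + μ / 2 * ‖y - x‖ ^ 2 ≤ F y)
    (hup : ∀ x y, F y ≤ F x + ⟪G x, y - x⟫ + L / 2 * ‖y - x‖ ^ 2) (a b : E) :
    μ * L * ‖a - b‖ ^ 2 + ‖G a - G b‖ ^ 2 ≤ (L + μ) * ⟪G a - G b, a - b⟫ := by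
  -- `F - μ/2 ‖·‖²` satisfies the bounds with slope `G - μ • id`, constants `0` and `L - μ`
  have hsq : ∀ x y : E, ‖y‖ ^ 2 = ‖x‖ ^ 2 + 2 * ⟪x, y - x⟫ + ‖y - x‖ ^ 2 := fun x y => by
    rw [← norm_add_sq_real, add_sub_cancel]
  have hco := norm_sub_sq_le_mul_inner (h := fun x => F x - μ / 2 * ‖x‖ ^ 2)
    (G := fun x => G x - μ • x) (K := L - μ) (sub_nonneg.2 hμL)
    (fun x y => by
      rw [inner_sub_left, real_inner_smul_left]
      linear_combination hlow x y + μ / 2 * hsq x y)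
    (fun x y => by
      rw [inner_sub_left, real_inner_smul_left]
      linear_combination hup x y - μ / 2 * hsq x y) b a
  have hG : G a - μ • a - (G b - μ • b) = (G a - G b) - μ • (a - b) := by module
  rw [hG] at hco
  generalize G a - G b = d at hco ⊢
  generalize a - b = u at hco ⊢
  rw [norm_sub_sq_real, real_inner_smul_right, norm_smul, inner_sub_left,
    real_inner_smul_left, real_inner_self_eq_norm_sq, Real.norm_eq_abs, mul_pow, sq_abs] at hco
  linear_combination hco

theorem weighted_norm_sq_le_norm_add_smul_sq {μ L γ : ℝ} (hγ : 0 < γ) (hLμ : 0 < L + μ)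
    {u d : E} (hinterp : μ * L * ‖u‖ ^ 2 + ‖d‖ ^ 2 ≤ (L + μ) * ⟪d, u⟫) :
    (1 + 2 * γ * μ * L / (L + μ)) * ‖u‖ ^ 2 + (1 + 2 / (γ * (L + μ))) * γ ^ 2 * ‖d‖ ^ 2
      ≤ ‖u + γ • d‖ ^ 2 := by
  rw [norm_add_sq_real, real_inner_smul_right, norm_smul, Real.norm_of_nonneg hγ.le,
    real_inner_comm]
  have key : 2 * γ / (L + μ) * (μ * L * ‖u‖ ^ 2 + ‖d‖ ^ 2) ≤ 2 * γ * ⟪d, u⟫ := by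
    calc 2 * γ / (L + μ) * (μ * L * ‖u‖ ^ 2 + ‖d‖ ^ 2)
        ≤ 2 * γ / (L + μ) * ((L + μ) * ⟪d, u⟫) := by gcongr
      _ = 2 * γ * ⟪d, u⟫ := by field_simp
  have hcoef : (1 + 2 / (γ * (L + μ))) * γ ^ 2 = γ ^ 2 + 2 * γ / (L + μ) := by
    field_simp
  rw [hcoef]
  linear_combination key

end QuadraticBounds

theorem ConvexOn.add_le_of_hasDerivAt_zero {φ : ℝ → ℝ} {φ' : ℝ} (hφ : ConvexOn ℝ Set.univ φ)
    (hd : HasDerivAt φ φ' 0) : φ 0 + φ' ≤ φ 1 := by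
  have := hφ.le_slope_of_hasDerivAt (Set.mem_univ _) (Set.mem_univ _) one_pos hd
  rw [slope_def_field, sub_zero, div_one] at this
  linarith

section Gradient

variable {E : Type*} [NormedAddCommGroup E] [InnerProductSpace ℝ E]

theorem hasDerivAt_add_smul (a v : E) (t : ℝ) : HasDerivAt (fun t : ℝ => a + t • v) v t := by
  simpa using ((hasDerivAt_id t).smul_const v).const_add a

theorem ConvexOn.comp_add_smul {φ : E → ℝ} (hφ : ConvexOn ℝ Set.univ φ) (a v : E) :
    ConvexOn ℝ Set.univ fun t : ℝ => φ (a + t • v) := by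
  have := hφ.comp_affineMap (AffineMap.lineMap a (a + v))
  simpa [Function.comp_def, AffineMap.lineMap_apply_module', add_comm] using this

variable [CompleteSpace E] {F : E → ℝ}

theorem hasDerivAt_comp_add_smul (hF : Differentiable ℝ F) (a v : E) (t : ℝ) :
    HasDerivAt (fun t : ℝ => F (a + t • v)) ⟪gradient F (a + t • v), v⟫ t :=
  (hF _).hasGradientAt.hasFDerivAt.comp_hasDerivAt t (hasDerivAt_add_smul a v t)

theorem add_inner_gradient_add_le_of_convexOn_sub {μ : ℝ} (hF : Differentiable ℝ F)
    (hc : ConvexOn ℝ Set.univ fun x => F x - μ / 2 * ‖x‖ ^ 2) (a b : E) :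
    F a + ⟪gradient F a, b - a⟫ + μ / 2 * ‖b - a‖ ^ 2 ≤ F b := by
  obtain ⟨v, rfl⟩ : ∃ v, b = a + v := ⟨b - a, by abel⟩
  have hd := (hasDerivAt_comp_add_smul hF a v 0).sub
    ((hasDerivAt_add_smul a v 0).norm_sq.const_mul (μ / 2))
  have := (hc.comp_add_smul a v).add_le_of_hasDerivAt_zero hd
  simp only [zero_smul, add_zero, one_smul] at this
  rw [norm_add_sq_real] at this
  rw [add_sub_cancel_left]
  linarith

theorem le_add_inner_gradient_add_of_lipschitz {L : ℝ} (hF : Differentiable ℝ F)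
    (hsm : ∀ a b, ‖gradient F a - gradient F b‖ ≤ L * ‖a - b‖) (a b : E) :
    F b ≤ F a + ⟪gradient F a, b - a⟫ + L / 2 * ‖b - a‖ ^ 2 := by
  obtain ⟨v, rfl⟩ : ∃ v, b = a + v := ⟨b - a, by abel⟩
  -- `t ↦ L/2 t² ‖v‖² - F (a + t v)` has monotone derivative, hence is convex
  set φ : ℝ → ℝ := fun t => L / 2 * t ^ 2 * ‖v‖ ^ 2 - F (a + t • v)
  have hd : ∀ t, HasDerivAt φ (L * t * ‖v‖ ^ 2 - ⟪gradient F (a + t • v), v⟫) t := fun t => by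
    refine ((((hasDerivAt_pow 2 t).const_mul (L / 2)).mul_const (‖v‖ ^ 2)).sub
      (hasDerivAt_comp_add_smul hF a v t)).congr_deriv ?_
    push_cast
    ring
  have hmono : Monotone (deriv φ) := fun s t hst => by
    rw [(hd s).deriv, (hd t).deriv]
    have hcs := real_inner_le_norm (gradient F (a + t • v) - gradient F (a + s • v)) v
    have hlip := hsm (a + t • v) (a + s • v)
    rw [add_sub_add_left_eq_sub, ← sub_smul, norm_smul, Real.norm_of_nonneg (sub_nonneg.2 hst)]
      at hlip
    rw [inner_sub_left] at hcs
    nlinarith [norm_nonneg v]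
  have := (hmono.convexOn_univ_of_deriv fun t => (hd t).differentiableAt).add_le_of_hasDerivAt_zero
    (hd 0)
  simp only [φ, zero_smul, add_zero, one_smul] at this
  rw [add_sub_cancel_left]
  linarith

theorem prox_weighted_norm_sq_le {μ L γ : ℝ} (hμL : μ ≤ L) (hγ : 0 < γ) (hLμ : 0 < L + μ)
    (hF : Differentiable ℝ F) (hc : ConvexOn ℝ Set.univ fun x => F x - μ / 2 * ‖x‖ ^ 2)
    (hsm : ∀ a b, ‖gradient F a - gradient F b‖ ≤ L * ‖a - b‖) {p z : E}
    (hp : p + γ • gradient F p = z) (xstar : E) :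
    (1 + 2 * γ * μ * L / (L + μ)) * ‖p - xstar‖ ^ 2
        + (1 + 2 / (γ * (L + μ))) * γ ^ 2 * ‖gradient F p - gradient F xstar‖ ^ 2
      ≤ ‖z - (xstar + γ • gradient F xstar)‖ ^ 2 := by
  have hres : z - (xstar + γ • gradient F xstar)
      = (p - xstar) + γ • (gradient F p - gradient F xstar) := by
    rw [← hp]
    module
  rw [hres]
  exact weighted_norm_sq_le_norm_add_smul_sq hγ hLμ <| interpolation_of_quadratic_bounds hμL
    (add_inner_gradient_add_le_of_convexOn_sub hF hc)
    (le_add_inner_gradient_add_of_lipschitz hF hsm) _ _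

end Gradient

section Averages

variable {E : Type*} [NormedAddCommGroup E] [InnerProductSpace ℝ E] {ι : Type*}

theorem card_mul_norm_average_sub_sq_le (t : Finset ι) (p : ι → E) (c : E) :
    (#t : ℝ) * ‖(#t : ℝ)⁻¹ • ∑ i ∈ t, p i - c‖ ^ 2 ≤ ∑ i ∈ t, ‖p i - c‖ ^ 2 := by
  rcases t.eq_empty_or_nonempty with rfl | ht
  · simp
  have hcard : (0 : ℝ) < #t := by exact_mod_cast ht.card_pos
  have havg : (#t : ℝ)⁻¹ • ∑ i ∈ t, p i - c = (#t : ℝ)⁻¹ • ∑ i ∈ t, (p i - c) := by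
    rw [sum_sub_distrib, sum_const, smul_sub, ← Nat.cast_smul_eq_nsmul ℝ, inv_smul_smul₀ hcard.ne']
  have hjensen : ‖∑ i ∈ t, (p i - c)‖ ^ 2 ≤ #t * ∑ i ∈ t, ‖p i - c‖ ^ 2 :=
    (pow_le_pow_left₀ (norm_nonneg _) (norm_sum_le _ _) 2).trans sq_sum_le_card_mul_sum_sq
  rw [havg, norm_smul, Real.norm_of_nonneg (by positivity), mul_pow]
  calc (#t : ℝ) * ((#t : ℝ)⁻¹ ^ 2 * ‖∑ i ∈ t, (p i - c)‖ ^ 2)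
      ≤ (#t : ℝ) * ((#t : ℝ)⁻¹ ^ 2 * (#t * ∑ i ∈ t, ‖p i - c‖ ^ 2)) := by gcongr
    _ = ∑ i ∈ t, ‖p i - c‖ ^ 2 := by field_simp

variable [Fintype ι]

theorem lyapunov_step_le [DecidableEq ι] {α β : ℝ} (hα : 0 ≤ α) (Ω : Finset ι) (c : E)
    (p h h' hstar : ι → E) (Z : ι → ℝ) (hout : ∀ i ∉ Ω, h' i = h i)
    (hin : ∀ i ∈ Ω, α * ‖p i - c‖ ^ 2 + β * ‖h' i - hstar i‖ ^ 2 ≤ Z i) :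
    α * #Ω * ‖(#Ω : ℝ)⁻¹ • ∑ i ∈ Ω, p i - c‖ ^ 2 + β * ∑ i, ‖h' i - hstar i‖ ^ 2
      ≤ ∑ i ∈ Ω, (Z i - β * ‖h i - hstar i‖ ^ 2) + β * ∑ i, ‖h i - hstar i‖ ^ 2 := by
  have hsplit : ∀ k : ι → E, ∑ i, ‖k i - hstar i‖ ^ 2
      = ∑ i ∈ Ω, ‖k i - hstar i‖ ^ 2 + ∑ i ∈ Ωᶜ, ‖k i - hstar i‖ ^ 2 := fun k =>
    (sum_add_sum_compl Ω _).symm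
  have hcompl : ∑ i ∈ Ωᶜ, ‖h' i - hstar i‖ ^ 2 = ∑ i ∈ Ωᶜ, ‖h i - hstar i‖ ^ 2 :=
    sum_congr rfl fun i hi => by rw [hout i (mem_compl.1 hi)]
  have hsum := sum_le_sum hin
  rw [sum_add_distrib, ← mul_sum, ← mul_sum] at hsum
  rw [hsplit h', hsplit h, hcompl, sum_sub_distrib, ← mul_sum, mul_assoc]
  nlinarith [mul_le_mul_of_nonneg_left (card_mul_norm_average_sub_sq_le Ω p c) hα]

theorem sum_norm_sub_average_sq_le (v : ι → E) :
    ∑ i, ‖v i - (Fintype.card ι : ℝ)⁻¹ • ∑ j, v j‖ ^ 2 ≤ ∑ i, ‖v i‖ ^ 2 := by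
  set m := (Fintype.card ι : ℝ)⁻¹ • ∑ j, v j
  have hm : ∑ i, ⟪v i, m⟫ = Fintype.card ι * ‖m‖ ^ 2 := by
    rcases isEmpty_or_nonempty ι with hι | hι
    · simp
    rw [← sum_inner, ← real_inner_self_eq_norm_sq, ← real_inner_smul_left, smul_smul,
      mul_inv_cancel₀ (by positivity), one_smul]
  simp only [norm_sub_sq_real, sum_add_distrib, sum_sub_distrib, ← mul_sum, hm, sum_const,
    card_univ, nsmul_eq_mul]
  nlinarith [sq_nonneg ‖m‖, (Fintype.card ι).cast_nonneg (α := ℝ)]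

theorem sum_norm_add_smul_sub_average_sq_le (w : E) (γ : ℝ) (v : ι → E) :
    ∑ i, ‖w + γ • (v i - (Fintype.card ι : ℝ)⁻¹ • ∑ j, v j)‖ ^ 2
      ≤ Fintype.card ι * ‖w‖ ^ 2 + γ ^ 2 * ∑ i, ‖v i‖ ^ 2 := by
  set e := fun i => v i - (Fintype.card ι : ℝ)⁻¹ • ∑ j, v j
  have hcentered : ∑ i, e i = 0 := by
    rcases isEmpty_or_nonempty ι with hι | hι
    · simp
    simp only [e, sum_sub_distrib, sum_const, card_univ, ← Nat.cast_smul_eq_nsmul ℝ]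
    rw [smul_inv_smul₀ (by positivity), sub_self]
  have hexpand : ∑ i, ‖w + γ • e i‖ ^ 2
      = Fintype.card ι * ‖w‖ ^ 2 + γ ^ 2 * ∑ i, ‖e i‖ ^ 2 := by
    simp only [norm_add_sq_real, norm_smul, real_inner_smul_right, sum_add_distrib, ← mul_sum,
      ← inner_sum, hcentered, inner_zero_right, sum_const, card_univ, nsmul_eq_mul, mul_pow,
      Real.norm_eq_abs, sq_abs]
    ring
  rw [hexpand]
  gcongr _ + _ * ?_
  exact sum_norm_sub_average_sq_le v

theorem sum_powersetCard_succ_sum_mem [DecidableEq ι] {M : Type*} [AddCommMonoid M] (s : ℕ)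
    (F : ι → M) :
    ∑ Ω ∈ powersetCard (s + 1) univ, ∑ i ∈ Ω, F i
      = (Fintype.card ι - 1).choose s • ∑ i, F i := by
  rw [sum_comm' (t' := univ) (s' := fun i => (powersetCard (s + 1) univ).filter ({i} ⊆ ·))
    fun Ω i => by simp, smul_sum]
  refine sum_congr rfl fun i _ => ?_
  rw [sum_const, card_filter_powersetCard_subset _ _ _ (subset_univ _) (by simp)]
  simp

theorem choose_inv_mul_sum_powersetCard_sum_mem [DecidableEq ι] {s : ℕ}
    (hs : s ≤ Fintype.card ι) (F : ι → ℝ) :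
    ((Fintype.card ι).choose s : ℝ)⁻¹ * ∑ Ω ∈ powersetCard s univ, ∑ i ∈ Ω, F i
      = s / Fintype.card ι * ∑ i, F i := by
  obtain _ | k := s
  · simp
  obtain ⟨m, hm⟩ : ∃ m, Fintype.card ι = m + 1 := ⟨Fintype.card ι - 1, by omega⟩
  rw [sum_powersetCard_succ_sum_mem, nsmul_eq_mul, hm, add_tsub_cancel_right]
  have hchoose : ((m + 1 : ℕ) : ℝ) * m.choose k = (m + 1).choose (k + 1) * (k + 1 : ℕ) := by
    exact_mod_cast Nat.add_one_mul_choose_eq m k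
  have hpos : ((m + 1).choose (k + 1) : ℝ) ≠ 0 := by
    exact_mod_cast (Nat.choose_pos (by omega)).ne'
  field_simp
  push_cast at hchoose ⊢
  linear_combination (∑ i, F i) * hchoose

end Averages

theorem le_max_mul_lyapunov {μ L γ s n W A S : ℝ} (hμ : 0 < μ) (hL : 0 < L) (hγ : 0 < γ)
    (hs : 0 ≤ s) (hn : 0 < n) (hW : 0 ≤ W) (hA : 0 ≤ A) (hS : S ≤ n * W + γ ^ 2 * A) :
    s / n * (S - (1 + 2 / (γ * (L + μ))) * γ ^ 2 * A) + (1 + 2 / (γ * (L + μ))) * γ ^ 2 * A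
      ≤ max (1 - 2 * γ * μ * L / (L + μ + 2 * γ * μ * L)) (1 - 2 / (γ * (L + μ) + 2) * (s / n))
        * ((1 + 2 * γ * μ * L / (L + μ)) * s * W + (1 + 2 / (γ * (L + μ))) * γ ^ 2 * A) := by
  set α := 1 + 2 * γ * μ * L / (L + μ)
  set β := (1 + 2 / (γ * (L + μ))) * γ ^ 2
  set c₁ := 1 - 2 * γ * μ * L / (L + μ + 2 * γ * μ * L)
  set c₂ := 1 - 2 / (γ * (L + μ) + 2) * (s / n)
  have hα : c₁ * α = 1 := by
    simp only [c₁, α]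
    field_simp
    ring
  have hβ : c₂ * β = s / n * γ ^ 2 + (1 - s / n) * β := by
    simp only [c₂, β]
    field_simp
    ring
  have hαW : 0 ≤ α * s * W := by positivity
  have hβA : 0 ≤ β * A := by positivity
  calc s / n * (S - β * A) + β * A ≤ s / n * (n * W + γ ^ 2 * A - β * A) + β * A := by gcongr
    _ = c₁ * (α * s * W) + c₂ * (β * A) := by
        have hsn : s / n * (n * W) = s * W := by field_simp
        linear_combination hsn - (s * W) * hα - A * hβ
    _ ≤ max c₁ c₂ * (α * s * W) + max c₁ c₂ * (β * A) := by
        gcongr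
        exacts [le_max_left _ _, le_max_right _ _]
    _ = max c₁ c₂ * (α * s * W + β * A) := by ring

theorem pointSAGA_one_step_contraction_general {E : Type*} [NormedAddCommGroup E]
    [InnerProductSpace ℝ E] [FiniteDimensional ℝ E]
    (μ L γ : ℝ) (hμ : 0 < μ) (hμL : μ ≤ L) (hγ : 0 < γ)
    (n s : ℕ) (hn : 1 ≤ n) (hsn : s ≤ n)
    (f : Fin n → E → ℝ) (hdiff : ∀ i, Differentiable ℝ (f i))
    (hsc : ∀ i, ConvexOn ℝ Set.univ (fun x => f i x - μ / 2 * ‖x‖ ^ 2))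
    (hsmooth : ∀ i, ∀ a b : E, ‖gradient (f i) a - gradient (f i) b‖ ≤ L * ‖a - b‖)
    (xstar : E) (hstar : ∑ i, gradient (f i) xstar = 0)
    (x : E) (gi : Fin n → E) (g : E) (hg : g = (n : ℝ)⁻¹ • ∑ i, gi i)
    -- one Point-SAGA step for each size-s subset Ω:
    (xi' : Finset (Fin n) → Fin n → E)
    (hxi' : ∀ Ω : Finset (Fin n), Ω.card = s → ∀ i ∈ Ω,
      xi' Ω i + γ • gradient (f i) (xi' Ω i) = x + γ • gi i - γ • g)
    (gi' : Finset (Fin n) → Fin n → E)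
    (hgi'in : ∀ Ω : Finset (Fin n), Ω.card = s → ∀ i ∈ Ω,
      gi' Ω i = gradient (f i) (xi' Ω i))
    (hgi'out : ∀ Ω : Finset (Fin n), Ω.card = s → ∀ i ∉ Ω, gi' Ω i = gi i)
    (x' : Finset (Fin n) → E)
    (hx' : ∀ Ω : Finset (Fin n), Ω.card = s → x' Ω = (s : ℝ)⁻¹ • ∑ i ∈ Ω, xi' Ω i)
    -- the Lyapunov function:
    (Ψ : E → (Fin n → E) → ℝ)
    (hΨ : ∀ (y : E) (h : Fin n → E),
      Ψ y h = (1 + 2 * γ * μ * L / (L + μ)) * s * ‖y - xstar‖ ^ 2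
        + (1 + 2 / (γ * (L + μ))) * γ ^ 2 *
            ∑ i, ‖h i - gradient (f i) xstar‖ ^ 2) :
    ((n.choose s : ℝ))⁻¹ *
        ∑ Ω ∈ powersetCard s (univ : Finset (Fin n)), Ψ (x' Ω) (gi' Ω)
      ≤ max (1 - 2 * γ * μ * L / (L + μ + 2 * γ * μ * L))
            (1 - 2 / (γ * (L + μ) + 2) * ((s : ℝ) / n)) * Ψ x gi := by
  have hL : 0 < L := hμ.trans_le hμL
  set β := (1 + 2 / (γ * (L + μ))) * γ ^ 2
  set v : Fin n → E := fun i => gi i - gradient (f i) xstar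
  set Z : Fin n → ℝ := fun i => ‖x - xstar + γ • (v i - g)‖ ^ 2
  have hmean : g = (Fintype.card (Fin n) : ℝ)⁻¹ • ∑ i, v i := by
    simp [v, sum_sub_distrib, hstar, hg]
  have hvar := sum_norm_add_smul_sub_average_sq_le (x - xstar) γ v
  have havg := choose_inv_mul_sum_powersetCard_sum_mem (by simpa using hsn)
    fun i => Z i - β * ‖v i‖ ^ 2
  rw [← hmean, Fintype.card_fin] at hvar
  rw [Fintype.card_fin] at havg
  have hC : (n.choose s : ℝ) ≠ 0 := by exact_mod_cast (Nat.choose_pos hsn).ne'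
  calc _ ≤ (n.choose s : ℝ)⁻¹ * ∑ Ω ∈ powersetCard s univ,
          (∑ i ∈ Ω, (Z i - β * ‖v i‖ ^ 2) + β * ∑ i, ‖v i‖ ^ 2) := by
        gcongr with Ω hΩ
        rw [mem_powersetCard_univ] at hΩ
        rw [hΨ, hx' Ω hΩ, ← hΩ]
        refine lyapunov_step_le (by positivity) Ω xstar (xi' Ω) gi (gi' Ω) _ Z (hgi'out Ω hΩ)
          fun i hi => ?_
        rw [hgi'in Ω hΩ i hi]
        convert prox_weighted_norm_sq_le hμL hγ (by linarith) (hdiff i) (hsc i) (hsmooth i)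
          (hxi' Ω hΩ i hi) xstar using 3
        module
    _ = s / n * ∑ i, (Z i - β * ‖v i‖ ^ 2) + β * ∑ i, ‖v i‖ ^ 2 := by
        rw [sum_add_distrib, mul_add, havg, sum_const, card_powersetCard, card_univ,
          Fintype.card_fin, nsmul_eq_mul, inv_mul_cancel_left₀ hC]
    _ ≤ _ := by
        rw [sum_sub_distrib, ← mul_sum, hΨ x gi]
        exact le_max_mul_lyapunov hμ hL hγ s.cast_nonneg (by exact_mod_cast hn) (sq_nonneg _)
          (by positivity) hvar

/-- The one-step contraction (eqff) at the heart of Theorem 1 of the paper: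
one step of minibatch Point-SAGA, averaged over all size-s subsets Ω, contracts
the Lyapunov function Ψ by the stated factor. -/
theorem pointSAGA_one_step_contraction {E : Type*} [NormedAddCommGroup E]
    [InnerProductSpace ℝ E] [FiniteDimensional ℝ E]
    (μ L γ : ℝ) (hμ : 0 < μ) (hμL : μ ≤ L) (hγ : 0 < γ)
    (n s : ℕ) (hn : 1 ≤ n) (hs1 : 1 ≤ s) (hsn : s ≤ n)
    (f : Fin n → E → ℝ) (hdiff : ∀ i, Differentiable ℝ (f i))
    (hsc : ∀ i, ConvexOn ℝ Set.univ (fun x => f i x - μ / 2 * ‖x‖ ^ 2))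
    (hsmooth : ∀ i, ∀ a b : E, ‖gradient (f i) a - gradient (f i) b‖ ≤ L * ‖a - b‖)
    (xstar : E) (hstar : ∑ i, gradient (f i) xstar = 0)
    (x : E) (gi : Fin n → E) (g : E) (hg : g = (n : ℝ)⁻¹ • ∑ i, gi i)
    -- one Point-SAGA step for each size-s subset Ω:
    (xi' : Finset (Fin n) → Fin n → E)
    (hxi' : ∀ Ω : Finset (Fin n), Ω.card = s → ∀ i ∈ Ω,
      xi' Ω i + γ • gradient (f i) (xi' Ω i) = x + γ • gi i - γ • g)
    (gi' : Finset (Fin n) → Fin n → E)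
    (hgi'in : ∀ Ω : Finset (Fin n), Ω.card = s → ∀ i ∈ Ω,
      gi' Ω i = gradient (f i) (xi' Ω i))
    (hgi'out : ∀ Ω : Finset (Fin n), Ω.card = s → ∀ i ∉ Ω, gi' Ω i = gi i)
    (x' : Finset (Fin n) → E)
    (hx' : ∀ Ω : Finset (Fin n), Ω.card = s → x' Ω = (s : ℝ)⁻¹ • ∑ i ∈ Ω, xi' Ω i)
    -- the Lyapunov function:
    (Ψ : E → (Fin n → E) → ℝ)
    (hΨ : ∀ (y : E) (h : Fin n → E),
      Ψ y h = (1 + 2 * γ * μ * L / (L + μ)) * s * ‖y - xstar‖ ^ 2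
        + (1 + 2 / (γ * (L + μ))) * γ ^ 2 *
            ∑ i, ‖h i - gradient (f i) xstar‖ ^ 2) :
    ((n.choose s : ℝ))⁻¹ *
        ∑ Ω ∈ powersetCard s (univ : Finset (Fin n)), Ψ (x' Ω) (gi' Ω)
      ≤ max (1 - 2 * γ * μ * L / (L + μ + 2 * γ * μ * L))
            (1 - 2 / (γ * (L + μ) + 2) * ((s : ℝ) / n)) * Ψ x gi :=
  pointSAGA_one_step_contraction_general μ L γ hμ hμL hγ n s hn hsn f hdiff hsc hsmooth xstar hstar
    x gi g hg xi' hxi' gi' hgi'in hgi'out x' hx' Ψ hΨ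
end

section
/- Let 0 < μ ≤ L, γ > 0 and n ≥ 1 be given. Then max{ 1 − 2γμL/(L + μ + 2γμL), 1 − 2/(n·(γ(L+μ) + 2)) } ≤ max{ 1/(1 + γμ), 1 − 1/((γL + 1)·n) }. In fact, both inequalities hold term-wise: 1 − 2γμL/(L + μ + 2γμL) ≤ 1/(1 + γμ) and 1 − 2/(n·(γ(L+μ)+2)) ≤ 1 − 1/((γL+1)·n). -/
/-- The paper's rate (for minibatch size s = 1) is better than the rate
implicit in Defazio (2016, Theorem 5); both comparisons hold term-wise. -/
theorem rate_comparison_with_defazio (μ L γ : ℝ) (n : ℕ)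
    (hμ : 0 < μ) (hμL : μ ≤ L) (hγ : 0 < γ) (hn : 1 ≤ n) :
    (max (1 - 2 * γ * μ * L / (L + μ + 2 * γ * μ * L))
        (1 - 2 / ((n : ℝ) * (γ * (L + μ) + 2)))
      ≤ max (1 / (1 + γ * μ)) (1 - 1 / ((γ * L + 1) * n))) ∧
    (1 - 2 * γ * μ * L / (L + μ + 2 * γ * μ * L) ≤ 1 / (1 + γ * μ)) ∧
    (1 - 2 / ((n : ℝ) * (γ * (L + μ) + 2)) ≤ 1 - 1 / ((γ * L + 1) * n)) := by
  have hL : 0 < L := lt_of_lt_of_le hμ hμL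
  have hnR : (1 : ℝ) ≤ (n : ℝ) := by exact_mod_cast hn
  have hnpos : (0 : ℝ) < (n : ℝ) := lt_of_lt_of_le one_pos hnR
  have hd1 : 0 < L + μ + 2 * γ * μ * L := by positivity
  have hd2 : 0 < 1 + γ * μ := by positivity
  have h1 : 1 - 2 * γ * μ * L / (L + μ + 2 * γ * μ * L) ≤ 1 / (1 + γ * μ) := by
    rw [sub_le_iff_le_add, div_add_div _ _ (ne_of_gt hd2) (ne_of_gt hd1),
      le_div_iff₀ (by positivity)]
    nlinarith [mul_pos hγ hμ, mul_pos (mul_pos hγ hμ) hL,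
      mul_le_mul_of_nonneg_left hμL (le_of_lt (mul_pos hγ hμ))]
  have h2 : 1 - 2 / ((n : ℝ) * (γ * (L + μ) + 2)) ≤ 1 - 1 / ((γ * L + 1) * n) := by
    have hA : 0 < (n : ℝ) * (γ * (L + μ) + 2) := by positivity
    have hB : 0 < (γ * L + 1) * n := by positivity
    have : 1 / ((γ * L + 1) * n) ≤ 2 / ((n : ℝ) * (γ * (L + μ) + 2)) := by
      rw [div_le_div_iff₀ hB hA]
      nlinarith [mul_le_mul_of_nonneg_left hμL (le_of_lt hγ), mul_pos hγ hL]
    linarith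
  exact ⟨max_le_max h1 h2, h1, h2⟩
end

section
/- Let 0 < μ ≤ L, n ≥ 1 and s ∈ {1,…,n}, and set γ := √(s/(L·μ·n)) and ρ := max{ 1 − 2γμL/(L + μ + 2γμL), 1 − (2/(γ(L+μ)+2))·(s/n) }. Let Ψ⁰ > 0 and 0 < ε ≤ Ψ⁰. Then for every natural number T with T ≥ (1 + √(L·n/(μ·s)) + n/s) · log(Ψ⁰/ε), one has ρ^T · Ψ⁰ ≤ ε. -/
set_option maxHeartbeats 1000000


/-- The accelerated-complexity part of the Corollary of the paper: with the
stepsize choice γ = √(s/(Lμn)), the iteration complexity of Point-SAGA is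
O((√(Ln/(μs)) + n/s)·log(Ψ⁰/ε)). -/
theorem pointSAGA_accelerated_complexity (μ L : ℝ) (n s : ℕ)
    (hμ : 0 < μ) (hμL : μ ≤ L)
    (hn : 1 ≤ n) (hs1 : 1 ≤ s) (hsn : s ≤ n)
    (γ : ℝ) (hγ : γ = Real.sqrt ((s : ℝ) / (L * μ * n)))
    (ρ : ℝ)
    (hρ : ρ = max (1 - 2 * γ * μ * L / (L + μ + 2 * γ * μ * L))
        (1 - 2 / (γ * (L + μ) + 2) * ((s : ℝ) / n)))
    (Ψ0 ε : ℝ) (hΨ0 : 0 < Ψ0) (hε : 0 < ε) (hεΨ0 : ε ≤ Ψ0)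
    (T : ℕ)
    (hT : (1 + Real.sqrt (L * n / (μ * s)) + (n : ℝ) / s) * Real.log (Ψ0 / ε) ≤ T) :
    ρ ^ T * Ψ0 ≤ ε := by
  have hL : 0 < L := lt_of_lt_of_le hμ hμL
  have hn' : (1:ℝ) ≤ (n:ℝ) := by exact_mod_cast hn
  have hs' : (1:ℝ) ≤ (s:ℝ) := by exact_mod_cast hs1
  have hnpos : (0:ℝ) < n := by linarith
  have hspos : (0:ℝ) < s := by linarith
  set q := Real.sqrt (L * (n:ℝ) / (μ * (s:ℝ))) with hqdef
  have hqpos : 0 < q := Real.sqrt_pos.2 (by positivity)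
  have hq2 : q ^ 2 = L * (n:ℝ) / (μ * (s:ℝ)) := Real.sq_sqrt (by positivity)
  have hγpos : 0 < γ := by rw [hγ]; exact Real.sqrt_pos.2 (by positivity)
  clear_value q
  have hγ2 : γ ^ 2 = (s:ℝ) / (L * μ * (n:ℝ)) := by
    rw [hγ]; exact Real.sq_sqrt (by positivity)
  -- key identity 1 : γ μ q = 1
  have key1 : γ * μ * q = 1 := by
    have hsq : (γ * μ * q) ^ 2 = 1 := by
      have : (γ * μ * q) ^ 2 = γ ^ 2 * μ ^ 2 * q ^ 2 := by ring
      rw [this, hγ2, hq2]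
      field_simp
    have hprod : (γ * μ * q - 1) * (γ * μ * q + 1) = 0 := by nlinarith [hsq]
    rcases mul_eq_zero.1 hprod with h | h
    · linarith
    · nlinarith [mul_pos (mul_pos hγpos hμ) hqpos]
  -- key identity 2 : γ L (n/s) = q
  have key2 : γ * L * ((n:ℝ) / s) = q := by
    have hsq : (γ * L * ((n:ℝ) / s)) ^ 2 = q ^ 2 := by
      have : (γ * L * ((n:ℝ) / s)) ^ 2 = γ ^ 2 * L ^ 2 * ((n:ℝ) / s) ^ 2 := by ring
      rw [this, hγ2, hq2]
      field_simp
    have h1 : γ * L * ((n:ℝ) / s) = Real.sqrt ((γ * L * ((n:ℝ) / s)) ^ 2) :=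
      (Real.sqrt_sq (by positivity)).symm
    rw [h1, hsq, Real.sqrt_sq hqpos.le]
  have key2' : γ * L * (n:ℝ) = q * s := by
    calc γ * L * (n:ℝ) = γ * L * ((n:ℝ) / s) * s := by field_simp
    _ = q * s := by rw [key2]
  set a : ℝ := 1 + q + (n:ℝ) / s with hadef
  clear_value a
  have hapos : 0 < a := by rw [hadef]; positivity
  have hD1 : 0 < L + μ + 2 * γ * μ * L := by positivity
  have hD2 : 0 < γ * (L + μ) + 2 := by positivity
  have h2L : γ * μ * L * q = L := by
    calc γ * μ * L * q = (γ * μ * q) * L := by ring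
    _ = L := by rw [key1]; ring
  have hρle : ρ ≤ 1 - 1 / a := by
    rw [hρ]
    apply max_le
    · have h1 : 1 / a ≤ 2 * γ * μ * L / (L + μ + 2 * γ * μ * L) := by
        rw [div_le_div_iff₀ hapos hD1, hadef]
        have hns : 0 ≤ γ * μ * L * ((n:ℝ) / s) := by positivity
        nlinarith [h2L, hμL, hns]
      linarith
    · have hrw : 2 / (γ * (L + μ) + 2) * ((s:ℝ) / n) = (2 * s) / ((γ * (L + μ) + 2) * n) := by
        field_simp
      have h1 : 1 / a ≤ 2 / (γ * (L + μ) + 2) * ((s:ℝ) / n) := by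
        rw [hrw, div_le_div_iff₀ hapos (by positivity), hadef]
        have hμn : γ * μ * (n:ℝ) ≤ γ * L * (n:ℝ) := by nlinarith [mul_nonneg (mul_pos hγpos hnpos).le (sub_nonneg.2 hμL)]
        nlinarith [key2', hμn, hs']
      linarith
  have hρ0 : 0 ≤ ρ := by
    have h1 : 2 * γ * μ * L / (L + μ + 2 * γ * μ * L) ≤ 1 := by
      rw [div_le_one hD1]; nlinarith [hμ, hL]
    have := le_max_left (1 - 2 * γ * μ * L / (L + μ + 2 * γ * μ * L))
      (1 - 2 / (γ * (L + μ) + 2) * ((s:ℝ) / n))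
    rw [← hρ] at this
    linarith
  have hexp : ρ ≤ Real.exp (-(1 / a)) := by
    have := Real.add_one_le_exp (-(1 / a))
    linarith
  have hpow : ρ ^ T ≤ Real.exp (-(T / a)) := by
    calc ρ ^ T ≤ Real.exp (-(1 / a)) ^ T := pow_le_pow_left₀ hρ0 hexp T
    _ = Real.exp ((T : ℝ) * (-(1 / a))) := (Real.exp_nat_mul _ T).symm
    _ = Real.exp (-(T / a)) := by ring_nf
  have hlog : Real.log (Ψ0 / ε) ≤ (T : ℝ) / a := by
    rw [le_div_iff₀ hapos]
    calc Real.log (Ψ0 / ε) * a = a * Real.log (Ψ0 / ε) := by ring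
    _ ≤ T := hT
  have hfin : Real.exp (-(T / a)) ≤ ε / Ψ0 := by
    have h1 : -((T:ℝ) / a) ≤ Real.log (ε / Ψ0) := by
      have : Real.log (ε / Ψ0) = -Real.log (Ψ0 / ε) := by
        rw [← Real.log_inv]
        congr 1
        field_simp
      linarith [hlog, this.symm, this]
    calc Real.exp (-((T:ℝ) / a)) ≤ Real.exp (Real.log (ε / Ψ0)) := Real.exp_le_exp.2 h1
    _ = ε / Ψ0 := Real.exp_log (by positivity)
  calc ρ ^ T * Ψ0 ≤ Real.exp (-(T / a)) * Ψ0 := by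
        exact mul_le_mul_of_nonneg_right hpow hΨ0.le
  _ ≤ (ε / Ψ0) * Ψ0 := mul_le_mul_of_nonneg_right hfin hΨ0.le
  _ = ε := by field_simp
end
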